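/- Let K : ℝ³ \ {0} → ℝ³, K(x) = −(1/2π) x/|x|³. Then for every x ≠ 0 and all vectors η, a, b ∈ ℝ³: −((η·∇)K)(x) (a × b) + ((a·∇)K)(x) (η × b) + ((b·∇)K)(x) (a × η) = 0, where the products of the vector ((v·∇)K)(x) with the cross products are taken in the Clifford algebra (equivalently, quaternion) sense. -/

import Mathlib

/-- Embedding of `ℝ³` into the imaginary quaternions (the Clifford algebra `Cl₀,₂(ℝ)`). -/
def vecQ (v : Fin 3 → ℝ) : QuaternionAlgebra ℝ (-1) 0 (-1) := ⟨0, v 0, v 1, v 2⟩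

/-- The Euclidean norm on `Fin 3 → ℝ`. -/
noncomputable def enorm3 (x : Fin 3 → ℝ) : ℝ := Real.sqrt (x 0 ^ 2 + x 1 ^ 2 + x 2 ^ 2)

/-- The kernel `K(x) = −(1/2π) x/|x|³`. -/
noncomputable def kerK (x : Fin 3 → ℝ) : Fin 3 → ℝ :=
  (-(1 / (2 * Real.pi)) / enorm3 x ^ 3) • x

lemma q_pos (x : Fin 3 → ℝ) (hx : x ≠ 0) : 0 < x 0 ^ 2 + x 1 ^ 2 + x 2 ^ 2 := by
  have h : ∃ i, x i ≠ 0 := by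
    by_contra h; push_neg at h; exact hx (funext h)
  obtain ⟨i, hi⟩ := h
  fin_cases i <;> positivity

lemma enorm3_pos (x : Fin 3 → ℝ) (hx : x ≠ 0) : 0 < enorm3 x :=
  Real.sqrt_pos.2 (q_pos x hx)

lemma enorm3_sq (x : Fin 3 → ℝ) : enorm3 x ^ 2 = x 0 ^ 2 + x 1 ^ 2 + x 2 ^ 2 := by
  unfold enorm3
  rw [Real.sq_sqrt]
  positivity

lemma hasFDeriv_q (x : Fin 3 → ℝ) :
    HasFDerivAt (fun y : Fin 3 → ℝ => y 0 ^ 2 + y 1 ^ 2 + y 2 ^ 2)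
      ((2 * x 0) • ContinuousLinearMap.proj (R := ℝ) (φ := fun _ : Fin 3 => ℝ) 0
        + (2 * x 1) • ContinuousLinearMap.proj (R := ℝ) (φ := fun _ : Fin 3 => ℝ) 1
        + (2 * x 2) • ContinuousLinearMap.proj (R := ℝ) (φ := fun _ : Fin 3 => ℝ) 2) x := by
  have hp : ∀ i : Fin 3, HasFDerivAt (fun y : Fin 3 → ℝ => y i)
      (ContinuousLinearMap.proj (R := ℝ) (φ := fun _ : Fin 3 => ℝ) i) x :=
    fun i => (ContinuousLinearMap.proj (R := ℝ) (φ := fun _ : Fin 3 => ℝ) i).hasFDerivAt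
  simp only [pow_two]
  have h := (((hp 0).mul (hp 0)).add ((hp 1).mul (hp 1))).add ((hp 2).mul (hp 2))
  refine h.congr_fderiv ?_
  ext v
  simp
  ring

lemma fderiv_kerK_apply (x : Fin 3 → ℝ) (hx : x ≠ 0) (v : Fin 3 → ℝ) :
    fderiv ℝ kerK x v =
      (-(1 / (2 * Real.pi)) / enorm3 x ^ 3) • v
        + ((3 * (1 / (2 * Real.pi)) * (x 0 * v 0 + x 1 * v 1 + x 2 * v 2)) / enorm3 x ^ 5) • x := by
  set c : ℝ := -(1 / (2 * Real.pi)) with hc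
  have hq0 : 0 < x 0 ^ 2 + x 1 ^ 2 + x 2 ^ 2 := q_pos x hx
  have hs0 : 0 < enorm3 x := enorm3_pos x hx
  have hsss : Real.sqrt (x 0 ^ 2 + x 1 ^ 2 + x 2 ^ 2) = enorm3 x := rfl
  set Lq := (2 * x 0) • ContinuousLinearMap.proj (R := ℝ) (φ := fun _ : Fin 3 => ℝ) 0
        + (2 * x 1) • ContinuousLinearMap.proj (R := ℝ) (φ := fun _ : Fin 3 => ℝ) 1
        + (2 * x 2) • ContinuousLinearMap.proj (R := ℝ) (φ := fun _ : Fin 3 => ℝ) 2 with hLq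
  have hq : HasFDerivAt (fun y : Fin 3 → ℝ => y 0 ^ 2 + y 1 ^ 2 + y 2 ^ 2) Lq x := hasFDeriv_q x
  have hsqrt : HasDerivAt (fun t : ℝ => Real.sqrt t)
      (1 / (2 * Real.sqrt (x 0 ^ 2 + x 1 ^ 2 + x 2 ^ 2)))
      (x 0 ^ 2 + x 1 ^ 2 + x 2 ^ 2) := Real.hasDerivAt_sqrt hq0.ne'
  have hne : Real.sqrt (x 0 ^ 2 + x 1 ^ 2 + x 2 ^ 2) ^ 3 ≠ 0 := by
    rw [hsss]; positivity
  have hmul := ((hsqrt.pow 3).inv hne).const_mul c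
  have hg := hmul.comp_hasFDerivAt x hq
  have hK := hg.smul (hasFDerivAt_id (𝕜 := ℝ) x)
  have hK' := hK.congr_of_eventuallyEq (Filter.Eventually.of_forall
    (fun y : Fin 3 → ℝ => by
      show kerK y = _
      funext j
      simp [kerK, enorm3, div_eq_mul_inv, Function.comp, hc]))
  rw [hK'.fderiv]
  funext i
  simp only [ContinuousLinearMap.add_apply, ContinuousLinearMap.smul_apply,
    ContinuousLinearMap.smulRight_apply, ContinuousLinearMap.id_apply, hLq,
    ContinuousLinearMap.proj_apply, Pi.add_apply, Pi.smul_apply, smul_eq_mul, hsss,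
    Function.comp, id_eq, Nat.cast_ofNat, Pi.inv_apply, Pi.pow_apply]
  have h5 : enorm3 x ^ 5 ≠ 0 := by positivity
  have h3 : enorm3 x ^ 3 ≠ 0 := by positivity
  have hc3 : 3 * (1 / (2 * Real.pi)) = -3 * c := by rw [hc]; ring
  rw [hc3]
  have hs0' : enorm3 x ≠ 0 := hs0.ne'
  field_simp
  ring

/-- For `x ≠ 0` and all `η, a, b ∈ ℝ³`,
`−((η·∇)K)(a × b) + ((a·∇)K)(η × b) + ((b·∇)K)(a × η) = 0`,
with products taken in the Clifford (quaternion) algebra. -/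
theorem kernel_cross_identity (x : Fin 3 → ℝ) (hx : x ≠ 0) (η a b : Fin 3 → ℝ) :
    -vecQ (fderiv ℝ kerK x η) * vecQ (crossProduct a b)
        + vecQ (fderiv ℝ kerK x a) * vecQ (crossProduct η b)
        + vecQ (fderiv ℝ kerK x b) * vecQ (crossProduct a η) = 0 := by
  have hs0 : 0 < enorm3 x := enorm3_pos x hx
  have hsq : enorm3 x ^ 2 = x 0 ^ 2 + x 1 ^ 2 + x 2 ^ 2 := enorm3_sq x
  have key : ∀ v : Fin 3 → ℝ, fderiv ℝ kerK x v = fun i =>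
      (-(1 / (2 * Real.pi)) / enorm3 x ^ 5) * ((x 0 ^ 2 + x 1 ^ 2 + x 2 ^ 2) * v i
        - 3 * (x 0 * v 0 + x 1 * v 1 + x 2 * v 2) * x i) := by
    intro v
    rw [fderiv_kerK_apply x hx v]
    funext i
    rw [← hsq]
    have h5 : enorm3 x ^ 5 ≠ 0 := by positivity
    have h3 : enorm3 x ^ 3 ≠ 0 := by positivity
    have hs0' : enorm3 x ≠ 0 := hs0.ne'
    have hpi : Real.pi ≠ 0 := Real.pi_ne_zero
    simp only [Pi.add_apply, Pi.smul_apply, smul_eq_mul]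
    field_simp
    ring
  rw [key η, key a, key b]
  set t : ℝ := -(1 / (2 * Real.pi)) / enorm3 x ^ 5 with ht
  ext <;>
    simp only [vecQ, cross_apply, neg_mul, QuaternionAlgebra.re_add,
      QuaternionAlgebra.re_neg, QuaternionAlgebra.re_mul, QuaternionAlgebra.imI_add,
      QuaternionAlgebra.imI_neg, QuaternionAlgebra.imI_mul, QuaternionAlgebra.imJ_add,
      QuaternionAlgebra.imJ_neg, QuaternionAlgebra.imJ_mul, QuaternionAlgebra.imK_add,
      QuaternionAlgebra.imK_neg, QuaternionAlgebra.imK_mul, QuaternionAlgebra.re_zero,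
      QuaternionAlgebra.imI_zero, QuaternionAlgebra.imJ_zero, QuaternionAlgebra.imK_zero,
      Matrix.cons_val_zero, Matrix.cons_val_one, Matrix.head_cons, Matrix.cons_val_two,
      Matrix.tail_cons] <;>
    ring
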